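/- For all u, v ≥ 0, arccosh(cosh u · cosh v) ≥ sqrt(u² + v²), with equality if and only if u = 0 or v = 0. -/

import Mathlib

/-!
Since `sinh` is strictly convex on `[0, ∞)` and vanishes at `0`, `sinh s / s` is strictly
increasing there; hence so is the derivative `sinh √t / (2 √t)` of `t ↦ cosh √t`, which is
therefore strictly convex on `[0, ∞)`. The points `(u + v)²` and `(u - v)²` have midpoint
`u² + v²`, so for `u * v ≠ 0` strict convexity gives
`cosh √(u² + v²) < (cosh (u + v) + cosh (u - v)) / 2 = cosh u * cosh v`.
It remains to apply the increasing function `arcosh`.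
-/

/-- The inverse of `cosh` on `[1, ∞)`. -/
noncomputable def arcosh (x : ℝ) : ℝ := Real.log (x + Real.sqrt (x ^ 2 - 1))

theorem arcosh_eq_real_arcosh : arcosh = Real.arcosh := rfl

section

open Real Set

theorem strictConvexOn_sinh : StrictConvexOn ℝ (Ici 0) sinh := by
  refine StrictMonoOn.strictConvexOn_of_deriv (convex_Ici 0) continuous_sinh.continuousOn ?_
  rw [Real.deriv_sinh, interior_Ici]
  exact cosh_strictMonoOn.mono Ioi_subset_Ici_self

theorem strictMonoOn_sinh_div_self : StrictMonoOn (fun x => sinh x / x) (Ioi 0) := by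
  intro x hx y hy hxy
  simpa using strictConvexOn_sinh.secant_strict_mono self_mem_Ici (Ioi_subset_Ici_self hx)
    (Ioi_subset_Ici_self hy) (ne_of_gt hx) (ne_of_gt hy) hxy

theorem hasDerivAt_cosh_sqrt {t : ℝ} (ht : 0 < t) :
    HasDerivAt (fun t => cosh √t) (sinh √t / √t / 2) t :=
  (hasDerivAt_sqrt ht.ne').cosh.congr_deriv (by ring)

theorem strictConvexOn_cosh_sqrt : StrictConvexOn ℝ (Ici 0) (fun t => cosh √t) := by
  refine StrictMonoOn.strictConvexOn_of_deriv (convex_Ici 0) (by fun_prop) ?_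
  rw [interior_Ici]
  intro s hs t ht hst
  rw [(hasDerivAt_cosh_sqrt hs).deriv, (hasDerivAt_cosh_sqrt ht).deriv]
  gcongr ?_ / 2
  exact strictMonoOn_sinh_div_self (sqrt_pos.2 hs) (sqrt_pos.2 ht) (sqrt_lt_sqrt hs.le hst)

theorem cosh_sqrt_sq_add_sq_lt {u v : ℝ} (hu : u ≠ 0) (hv : v ≠ 0) :
    cosh √(u ^ 2 + v ^ 2) < cosh u * cosh v := by
  have hne : (u + v) ^ 2 ≠ (u - v) ^ 2 := by
    intro h
    apply mul_ne_zero hu hv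
    linarith
  have h := strictConvexOn_cosh_sqrt.2 (sq_nonneg (u + v)) (sq_nonneg (u - v)) hne
    one_half_pos one_half_pos (add_halves 1)
  simp only [smul_eq_mul] at h
  rw [sqrt_sq_eq_abs, sqrt_sq_eq_abs, cosh_abs, cosh_abs, cosh_add, cosh_sub] at h
  calc cosh √(u ^ 2 + v ^ 2) = cosh √(1 / 2 * (u + v) ^ 2 + 1 / 2 * (u - v) ^ 2) := by ring_nf
    _ < _ := h
    _ = cosh u * cosh v := by ring

theorem cosh_sqrt_zero_sq_add_sq (v : ℝ) : cosh √(0 ^ 2 + v ^ 2) = cosh 0 * cosh v := by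
  rw [zero_pow two_ne_zero, zero_add, sqrt_sq_eq_abs, cosh_abs, cosh_zero, one_mul]

theorem cosh_sqrt_sq_add_sq_zero_sq (u : ℝ) : cosh √(u ^ 2 + 0 ^ 2) = cosh u * cosh 0 := by
  rw [add_comm, mul_comm, cosh_sqrt_zero_sq_add_sq]

theorem cosh_sqrt_sq_add_sq_le (u v : ℝ) : cosh √(u ^ 2 + v ^ 2) ≤ cosh u * cosh v := by
  rcases eq_or_ne u 0 with rfl | hu
  · exact (cosh_sqrt_zero_sq_add_sq v).le
  rcases eq_or_ne v 0 with rfl | hv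
  · exact (cosh_sqrt_sq_add_sq_zero_sq u).le
  exact (cosh_sqrt_sq_add_sq_lt hu hv).le

theorem cosh_sqrt_sq_add_sq_eq_iff (u v : ℝ) :
    cosh √(u ^ 2 + v ^ 2) = cosh u * cosh v ↔ u = 0 ∨ v = 0 := by
  refine ⟨fun h => ?_, ?_⟩
  · by_contra! huv
    exact (cosh_sqrt_sq_add_sq_lt huv.1 huv.2).ne h
  · rintro (rfl | rfl)
    · exact cosh_sqrt_zero_sq_add_sq v
    · exact cosh_sqrt_sq_add_sq_zero_sq u

end

theorem arcosh_cosh_mul_cosh_ge_general (u v : ℝ) :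
    Real.sqrt (u ^ 2 + v ^ 2) ≤ arcosh (Real.cosh u * Real.cosh v) ∧
    (Real.sqrt (u ^ 2 + v ^ 2) = arcosh (Real.cosh u * Real.cosh v) ↔ u = 0 ∨ v = 0) := by
  have hpos : 0 < Real.cosh u * Real.cosh v := by positivity
  rw [arcosh_eq_real_arcosh, ← Real.arcosh_cosh (Real.sqrt_nonneg (u ^ 2 + v ^ 2)),
    Real.arcosh_le_arcosh (Real.cosh_pos _) hpos,
    Real.strictMonoOn_arcosh.injOn.eq_iff (Real.cosh_pos _) hpos]
  exact ⟨cosh_sqrt_sq_add_sq_le u v, cosh_sqrt_sq_add_sq_eq_iff u v⟩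

theorem arcosh_cosh_mul_cosh_ge (u v : ℝ) (hu : 0 ≤ u) (hv : 0 ≤ v) :
    Real.sqrt (u ^ 2 + v ^ 2) ≤ arcosh (Real.cosh u * Real.cosh v) ∧
    (Real.sqrt (u ^ 2 + v ^ 2) = arcosh (Real.cosh u * Real.cosh v) ↔ u = 0 ∨ v = 0) :=
  arcosh_cosh_mul_cosh_ge_general u v
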